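/- Stirling-number identity: for n−1 ≥ m ≥ 1, ∑_{l=0}^{n-m} C(n,l) S_1(n−l,m) D_l(a_1,…,a_r) = ∑_{l=0}^{n-m} C(n−1,l) S_1(n−l−1,m−1) D_l(−1|a_1,…,a_r) + (1/n) ∑_{l=0}^{n-m-1} C(n,l+1) S_1(n−l−1,m) [ r ∑_{i=0}^{l+1} C(l+1,i) c_i D_{l+1−i}(−1|a_1,…,a_r) − ∑_{j=1}^r ∑_{i=0}^{l+1} C(l+1,i) a_j c_i D_{l+1−i}(a_j−1|a_1,…,a_r,a_j) ]. -/

import Mathlib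

open Finset PowerSeries

/-- Exponential generating function: `∑ f n * t^n / n!`. -/
noncomputable def egf (f : ℕ → ℚ) : PowerSeries ℚ :=
  PowerSeries.mk fun n => f n / n.factorial

/-- The formal power series `log(1+t) = ∑_{m≥1} (-1)^{m-1} t^m / m`. -/
noncomputable def log1p : PowerSeries ℚ :=
  PowerSeries.mk fun n => if n = 0 then 0 else (-1) ^ (n - 1) / n

/-- Formal exponential composition: for `f` with zero constant term this is
`exp(f) = ∑_k f^k / k!` (the sum in each coefficient is finite). -/
noncomputable def expPS (f : PowerSeries ℚ) : PowerSeries ℚ :=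
  PowerSeries.mk fun n =>
    ∑ k ∈ Finset.range (n + 1), (PowerSeries.coeff n (f ^ k)) / k.factorial

/-- `(1+t)^a := exp(a · log(1+t))` as a formal power series. -/
noncomputable def onePow (a : ℚ) : PowerSeries ℚ := expPS (PowerSeries.C a * log1p)

/-- `e^{a t} = ∑ a^n t^n / n!`. -/
noncomputable def expAt (a : ℚ) : PowerSeries ℚ :=
  PowerSeries.mk fun n => a ^ n / n.factorial

/-- Falling factorial `(x)_n = x(x-1)⋯(x-n+1)`. -/
noncomputable def ffall (x : ℚ) (n : ℕ) : ℚ := ∏ i ∈ Finset.range n, (x - i)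

/-!
Write `P = ∏ⱼ ((1+t)^{aⱼ} - 1)` and `G_x = ∑ D_n(x) tⁿ/n!`, so that `P G_x = log(1+t)^r (1+t)^x`.
Differentiating `P G₀ = log(1+t)^r` and multiplying by `t = log(1+t) ∑ cₙ tⁿ/n!` gives
`t G₀' = r c G₋₁ - ∑ⱼ aⱼ c G⁽ʲ⁾`, where `G⁽ʲ⁾` is the generating function of the `r+1`-parameter
polynomials at `aⱼ - 1`: the bracket in the statement is `(l+1) D_{l+1}`. Since also
`G₀ = (1+t) G₋₁`, i.e. `D_l = D_l(-1) + l D_{l-1}(-1)`, what is left is an identity between sums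
of binomial coefficients and Stirling numbers, which follows from Pascal's rule and the recurrence
`S₁(k+1, j+1) = S₁(k, j) - k S₁(k, j+1)` read off from `(x)_{k+1} = (x)_k (x - k)`.
-/

theorem Derivation.leibniz_finset_prod {R A M : Type*} [CommSemiring R] [CommSemiring A]
    [Algebra R A] [AddCommMonoid M] [Module A M] [Module R M] [IsScalarTower R A M]
    (D : Derivation R A M) {ι : Type*} [DecidableEq ι] (s : Finset ι) (f : ι → A) :
    D (∏ i ∈ s, f i) = ∑ i ∈ s, (∏ j ∈ s.erase i, f j) • D (f i) := by
  induction s using Finset.induction_on with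
  | empty => simp
  | insert x s hx ih =>
    rw [prod_insert hx, D.leibniz, ih, sum_insert hx, erase_insert hx, smul_sum, add_comm]
    congr 1
    refine sum_congr rfl fun i hi => ?_
    rw [erase_insert_of_ne (ne_of_mem_of_not_mem hi hx).symm, prod_insert (mt mem_of_mem_erase hx),
      mul_smul]

theorem coeff_pow_eq_zero_of_lt {R : Type*} [CommSemiring R] {f : R⟦X⟧}
    (hf : constantCoeff f = 0) {n k : ℕ} (h : n < k) : coeff n (f ^ k) = 0 :=
  X_pow_dvd_iff.1 (pow_dvd_pow_of_dvd (X_dvd_iff.2 hf) k) n h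

noncomputable def expTrunc (f : ℚ⟦X⟧) (N : ℕ) : ℚ⟦X⟧ :=
  ∑ k ∈ range N, (k.factorial : ℚ)⁻¹ • f ^ k

theorem coeff_expPS_eq_coeff_expTrunc {f : ℚ⟦X⟧} (hf : constantCoeff f = 0) {n N : ℕ}
    (h : n < N) : coeff n (expPS f) = coeff n (expTrunc f N) := by
  rw [expPS, expTrunc, coeff_mk, map_sum,
    sum_subset (range_subset_range.2 h) fun k _ hk => by
      rw [coeff_pow_eq_zero_of_lt hf (by simpa using hk), zero_div]]
  simp [div_eq_inv_mul]

theorem derivative_expTrunc_succ (f : ℚ⟦X⟧) (N : ℕ) :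
    d⁄dX ℚ (expTrunc f (N + 1)) = d⁄dX ℚ f * expTrunc f N := by
  rw [expTrunc, expTrunc, map_sum, sum_range_succ', mul_sum]
  refine (add_eq_left.2 (by simp)).trans (sum_congr rfl fun k _ => ?_)
  have hk : ((k + 1 : ℕ) : ℚ⟦X⟧) * C ((k + 1 : ℕ) : ℚ)⁻¹ = 1 := by
    rw [← map_natCast C, ← map_mul, mul_inv_cancel₀ (by positivity), map_one]
  rw [Derivation.map_smul, Derivation.leibniz_pow, Nat.add_sub_cancel, Nat.factorial_succ,
    Nat.cast_mul, mul_inv]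
  simp only [nsmul_eq_mul, smul_eq_C_mul, smul_eq_mul, map_mul]
  linear_combination (C (k.factorial : ℚ)⁻¹ * f ^ k * d⁄dX ℚ f) * hk

theorem derivative_expPS {f : ℚ⟦X⟧} (hf : constantCoeff f = 0) :
    d⁄dX ℚ (expPS f) = d⁄dX ℚ f * expPS f := by
  ext n
  rw [coeff_derivative, coeff_expPS_eq_coeff_expTrunc hf (Nat.lt_succ_self (n + 1)),
    ← coeff_derivative, derivative_expTrunc_succ, coeff_mul, coeff_mul]
  refine sum_congr rfl fun p hp => ?_
  rw [coeff_expPS_eq_coeff_expTrunc hf (N := n + 1)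
    (by rw [HasAntidiagonal.mem_antidiagonal] at hp; omega)]

theorem coeff_X_mul_derivative {R : Type*} [CommSemiring R] (f : R⟦X⟧) (n : ℕ) :
    coeff n (X * d⁄dX R f) = n * coeff n f := by
  cases n with
  | zero => simp
  | succ n => rw [coeff_succ_X_mul, coeff_derivative, mul_comm]; push_cast; rfl

theorem eq_of_one_add_X_mul_derivative_eq {K : Type*} [Field K] [CharZero K] {f g : K⟦X⟧}
    {a : K} (hf : (1 + X) * d⁄dX K f = C a * f) (hg : (1 + X) * d⁄dX K g = C a * g)
    (h0 : constantCoeff f = constantCoeff g) : f = g := by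
  have hrec (h : K⟦X⟧) (hh : (1 + X) * d⁄dX K h = C a * h) (n : ℕ) :
      coeff (n + 1) h * (n + 1) = (a - n) * coeff n h := by
    have := congrArg (coeff n) hh
    rw [add_mul, one_mul, map_add, coeff_X_mul_derivative, coeff_derivative, coeff_C_mul] at this
    linear_combination this
  ext n
  induction n with
  | zero => simpa using h0
  | succ n ih =>
    refine mul_right_cancel₀ (Nat.cast_add_one_ne_zero n) ?_
    rw [hrec f hf, hrec g hg, ih]

theorem constantCoeff_log1p : constantCoeff log1p = 0 := by
  simp [log1p]

theorem one_add_X_mul_derivative_log1p : (1 + X) * d⁄dX ℚ log1p = 1 := by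
  have hcoeff (n : ℕ) : coeff n (d⁄dX ℚ log1p) = (-1) ^ n := by
    rw [coeff_derivative, log1p, coeff_mk, if_neg n.succ_ne_zero, Nat.add_sub_cancel,
      Nat.cast_add_one, div_mul_cancel₀ _ (Nat.cast_add_one_ne_zero n)]
  ext n
  cases n with
  | zero => simpa using hcoeff 0
  | succ n => simp [add_mul, hcoeff, coeff_succ_X_mul, pow_succ]

theorem constantCoeff_onePow (a : ℚ) : constantCoeff (onePow a) = 1 := by
  simp [onePow, expPS]

theorem one_add_X_mul_derivative_onePow (a : ℚ) :
    (1 + X) * d⁄dX ℚ (onePow a) = C a * onePow a := by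
  rw [onePow, derivative_expPS (by simp [constantCoeff_log1p]), ← onePow, Derivation.leibniz,
    derivative_C, smul_zero, add_zero, smul_eq_mul]
  linear_combination (C a * onePow a) * one_add_X_mul_derivative_log1p

theorem onePow_zero : onePow 0 = 1 :=
  eq_of_one_add_X_mul_derivative_eq (one_add_X_mul_derivative_onePow 0) (by simp)
    (by simp [constantCoeff_onePow])

theorem one_add_X_mul_onePow (a : ℚ) : (1 + X) * onePow a = onePow (a + 1) := by
  refine eq_of_one_add_X_mul_derivative_eq (a := a + 1) ?_ (one_add_X_mul_derivative_onePow _)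
    (by simp [constantCoeff_onePow])
  rw [Derivation.leibniz, smul_eq_mul, smul_eq_mul, map_add, derivative_X,
    Derivation.map_one_eq_zero, zero_add, map_add, map_one]
  linear_combination (1 + X) * one_add_X_mul_derivative_onePow a

theorem one_add_X_ne_zero : (1 + X : ℚ⟦X⟧) ≠ 0 := fun h => by
  simpa using congrArg constantCoeff h

theorem derivative_onePow (a : ℚ) : d⁄dX ℚ (onePow a) = C a * onePow (a - 1) :=
  mul_left_cancel₀ one_add_X_ne_zero <| by
    rw [one_add_X_mul_derivative_onePow, mul_left_comm, one_add_X_mul_onePow, sub_add_cancel]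

theorem derivative_log1p : d⁄dX ℚ log1p = onePow (-1) :=
  mul_left_cancel₀ one_add_X_ne_zero <| by
    rw [one_add_X_mul_derivative_log1p, one_add_X_mul_onePow, neg_add_cancel, onePow_zero]

theorem onePow_sub_one_ne_zero {a : ℚ} (ha : a ≠ 0) : onePow a - 1 ≠ 0 := fun h => by
  have h1 : coeff 0 (d⁄dX ℚ (onePow a)) = 0 := by
    rw [coeff_derivative, (sub_eq_zero.1 h)]; simp
  simp [derivative_onePow, constantCoeff_onePow, ha] at h1

theorem prod_onePow_sub_one_ne_zero {ι : Type*} {s : Finset ι} {a : ι → ℚ}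
    (ha : ∀ i ∈ s, a i ≠ 0) : ∏ i ∈ s, (onePow (a i) - 1) ≠ 0 :=
  prod_ne_zero_iff.2 fun i hi => onePow_sub_one_ne_zero (ha i hi)

theorem log1p_ne_zero : log1p ≠ 0 := fun h => by
  simpa [log1p] using congrArg (coeff 1) h

theorem derivative_prod_onePow_sub_one {ι : Type*} [DecidableEq ι] (s : Finset ι) (a : ι → ℚ) :
    d⁄dX ℚ (∏ i ∈ s, (onePow (a i) - 1)) =
      ∑ i ∈ s, C (a i) * onePow (a i - 1) * ∏ j ∈ s.erase i, (onePow (a j) - 1) := by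
  rw [Derivation.leibniz_finset_prod]
  refine sum_congr rfl fun i _ => ?_
  rw [map_sub, Derivation.map_one_eq_zero, sub_zero, derivative_onePow, smul_eq_mul, mul_comm]

theorem X_mul_derivative_eq_of_prod_mul_eq {r : ℕ} {a : Fin r → ℚ} (ha : ∀ j, a j ≠ 0)
    {G₀ G₁ c : ℚ⟦X⟧} {F : Fin r → ℚ⟦X⟧}
    (hG₀ : (∏ j, (onePow (a j) - 1)) * G₀ = log1p ^ r)
    (hG₁ : (∏ j, (onePow (a j) - 1)) * G₁ = log1p ^ r * onePow (-1))
    (hF : ∀ j, ((onePow (a j) - 1) * ∏ i, (onePow (a i) - 1)) * F j =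
      log1p ^ (r + 1) * onePow (a j - 1))
    (hc : log1p * c = X) :
    X * d⁄dX ℚ G₀ = (r : ℚ⟦X⟧) * (c * G₁) - ∑ j, C (a j) * (c * F j) := by
  classical
  set L := log1p
  set P := ∏ j, (onePow (a j) - 1)
  have hP : P ≠ 0 := prod_onePow_sub_one_ne_zero fun j _ => ha j
  have hPQ (j : Fin r) : (onePow (a j) - 1) * ∏ i ∈ univ.erase j, (onePow (a i) - 1) = P :=
    mul_prod_erase univ (fun i => onePow (a i) - 1) (mem_univ j)
  have hderiv : P * d⁄dX ℚ G₀ + G₀ * d⁄dX ℚ P = d⁄dX ℚ (L ^ r) := by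
    simpa [Derivation.leibniz, add_comm] using congrArg (d⁄dX ℚ) hG₀
  have hLpow : L * d⁄dX ℚ (L ^ r) = r * L ^ r * onePow (-1) := by
    rw [Derivation.leibniz_pow, derivative_log1p, nsmul_eq_mul, smul_eq_mul]
    rcases r with _ | r
    · simp
    · rw [Nat.add_sub_cancel]; push_cast; ring
  have hsum : X * L ^ (r + 1) * d⁄dX ℚ P = L * P * P * ∑ j, C (a j) * (c * F j) := by
    rw [derivative_prod_onePow_sub_one, mul_sum, mul_sum]
    refine sum_congr rfl fun j _ => ?_
    linear_combination -(X * C (a j) * ∏ i ∈ univ.erase j, (onePow (a i) - 1)) * hF j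
      + (X * C (a j) * P * F j) * hPQ j - (C (a j) * P * P * F j) * hc
  refine mul_left_cancel₀ (mul_ne_zero (mul_ne_zero log1p_ne_zero hP) hP) ?_
  linear_combination (L * P * X) * hderiv + (P * X) * hLpow - (L * X * d⁄dX ℚ P) * hG₀
    - ((r : ℚ⟦X⟧) * X * P) * hG₁ - ((r : ℚ⟦X⟧) * P * P * G₁) * hc - hsum

theorem coeff_egf (f : ℕ → ℚ) (n : ℕ) : coeff n (egf f) = f n / n.factorial :=
  coeff_mk _ _

theorem egf_injective : Function.Injective egf := fun f g h => funext fun n => by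
  have h := congrArg (coeff n) h
  rwa [coeff_egf, coeff_egf, div_left_inj' (by positivity)] at h

theorem coeff_egf_mul (f g : ℕ → ℚ) (n : ℕ) :
    coeff n (egf f * egf g) =
      (∑ i ∈ range (n + 1), (n.choose i : ℚ) * f i * g (n - i)) / n.factorial := by
  rw [coeff_mul, Nat.sum_antidiagonal_eq_sum_range_succ_mk, sum_div]
  refine sum_congr rfl fun i hi => ?_
  rw [coeff_egf, coeff_egf, Nat.cast_choose ℚ (Nat.le_of_lt_succ (mem_range.1 hi))]
  field_simp

theorem one_add_X_mul_egf (g : ℕ → ℚ) :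
    (1 + X) * egf g = egf fun n => g n + n * g (n - 1) := by
  ext n
  cases n with
  | zero => rw [add_mul, one_mul, map_add, coeff_zero_X_mul, coeff_egf, coeff_egf]; simp
  | succ n =>
    rw [add_mul, one_mul, map_add, coeff_succ_X_mul, coeff_egf, coeff_egf, coeff_egf,
      Nat.factorial_succ, Nat.add_sub_cancel]
    push_cast
    field_simp

theorem add_one_mul_daehee_succ {r : ℕ} {a : Fin r → ℚ} (ha : ∀ j, a j ≠ 0) {d₀ d₁ c : ℕ → ℚ}
    {e : Fin r → ℕ → ℚ}
    (h₀ : (∏ j, (onePow (a j) - 1)) * egf d₀ = log1p ^ r)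
    (h₁ : (∏ j, (onePow (a j) - 1)) * egf d₁ = log1p ^ r * onePow (-1))
    (he : ∀ j, ((onePow (a j) - 1) * ∏ i, (onePow (a i) - 1)) * egf (e j) =
      log1p ^ (r + 1) * onePow (a j - 1))
    (hc : log1p * egf c = X) (l : ℕ) :
    (r : ℚ) * (∑ i ∈ range (l + 2), ((l + 1).choose i : ℚ) * c i * d₁ (l + 1 - i))
      - ∑ j, ∑ i ∈ range (l + 2), ((l + 1).choose i : ℚ) * a j * c i * e j (l + 1 - i) =
      (l + 1) * d₀ (l + 1) := by
  have h := congrArg (coeff (l + 1)) (X_mul_derivative_eq_of_prod_mul_eq ha h₀ h₁ he hc)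
  rw [coeff_X_mul_derivative, coeff_egf, map_sub, map_sum, ← map_natCast C, coeff_C_mul,
    coeff_egf_mul] at h
  simp only [coeff_C_mul, coeff_egf_mul, mul_div_assoc', ← sum_div, ← sub_div, mul_sum,
    mul_assoc] at h
  rw [div_left_inj' (by positivity)] at h
  push_cast at h
  rw [h, mul_sum]
  simp only [mul_assoc, mul_left_comm (a _)]

theorem coeff_descPochhammer_succ_succ (R : Type*) [CommRing R] (k j : ℕ) :
    (descPochhammer R (k + 1)).coeff (j + 1) =
      (descPochhammer R k).coeff j - k * (descPochhammer R k).coeff (j + 1) := by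
  rw [descPochhammer_succ_right, ← map_natCast Polynomial.C, Polynomial.coeff_mul_X_sub_C,
    mul_comm]

theorem coeff_descPochhammer_eq_of_ffall {S1 : ℕ → ℕ → ℚ} {k : ℕ}
    (hS1 : ∀ x : ℚ, ffall x k = ∑ j ∈ range (k + 1), S1 k j * x ^ j) {j : ℕ} (hj : j ≤ k) :
    (descPochhammer ℚ k).coeff j = S1 k j := by
  have hpoly : descPochhammer ℚ k =
      ∑ i ∈ range (k + 1), Polynomial.C (S1 k i) * Polynomial.X ^ i := by
    refine Polynomial.funext fun x => ?_
    simp [descPochhammer_eval_eq_prod_range, Polynomial.eval_finsetSum, ← hS1, ffall]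
  simp [hpoly, Polynomial.finsetSum_coeff, Nat.lt_succ_of_le hj]

section

variable {R : Type*} [CommRing R]

theorem sum_range_choose_succ_mul (N K : ℕ) (u : ℕ → R) :
    ∑ l ∈ range (K + 1), ((N + 1).choose l : R) * u l =
      ∑ l ∈ range (K + 1), (N.choose l : R) * u l +
        ∑ l ∈ range K, (N.choose l : R) * u (l + 1) := by
  simp only [sum_range_succ' _ K, Nat.choose_succ_succ', Nat.cast_add, add_mul, sum_add_distrib,
    Nat.choose_zero_right]
  ring

theorem sum_range_choose_mul_stirling_succ {s : ℕ → ℕ → R}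
    (hrec : ∀ k j, j + 1 ≤ k → s (k + 1) (j + 1) = s k j - k * s k (j + 1))
    (hdiag : ∀ k, s k k = 1) {d e : ℕ → R} (he : ∀ l, e l = d l + l * d (l - 1))
    {N M : ℕ} (hMN : M ≤ N) :
    ∑ l ∈ range (N - M + 1), (N.choose l : R) * (s (N + 1 - l) (M + 1) * e l) =
      ∑ l ∈ range (N - M + 1), (N.choose l : R) * (s (N - l) M * d l) := by
  have hshifted :
      ∑ l ∈ range (N - M + 1), (N.choose l : R) * (s (N + 1 - l) (M + 1) * (l * d (l - 1))) =
      ∑ l ∈ range (N - M), (N.choose l : R) * ((N - l : ℕ) * s (N - l) (M + 1) * d l) := by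
    rw [sum_range_succ']
    refine (add_eq_left.2 (by simp)).trans (sum_congr rfl fun l _ => ?_)
    have hchoose : (N.choose (l + 1) : R) * (l + 1) = N.choose l * (N - l : ℕ) := by
      exact_mod_cast congrArg (Nat.cast : ℕ → R) (Nat.choose_succ_right_eq N l)
    rw [Nat.add_sub_add_right, Nat.add_sub_cancel]
    push_cast
    linear_combination (s (N - l) (M + 1) * d l) * hchoose
  have hlast : N + 1 - (N - M) = M + 1 ∧ N - (N - M) = M := by omega
  simp only [he, mul_add, sum_add_distrib, hshifted]
  rw [sum_range_succ, sum_range_succ _ (N - M), hlast.1, hlast.2, hdiag, hdiag, add_right_comm,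
    ← sum_add_distrib]
  congr 1
  refine sum_congr rfl fun l hl => ?_
  have hl : M + 1 ≤ N - l := by simp at hl; omega
  rw [show N + 1 - l = N - l + 1 by omega, hrec _ _ hl]
  ring

theorem sum_range_choose_mul_stirling {s : ℕ → ℕ → R}
    (hrec : ∀ k j, j + 1 ≤ k → s (k + 1) (j + 1) = s k j - k * s k (j + 1))
    (hdiag : ∀ k, s k k = 1) {d e : ℕ → R} (he : ∀ l, e l = d l + l * d (l - 1))
    {n m : ℕ} (hm : 1 ≤ m) (hmn : m + 1 ≤ n) :
    ∑ l ∈ range (n - m + 1), (n.choose l : R) * s (n - l) m * e l =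
      ∑ l ∈ range (n - m + 1), ((n - 1).choose l : R) * s (n - l - 1) (m - 1) * d l +
        ∑ l ∈ range (n - m), ((n - 1).choose l : R) * s (n - l - 1) m * e (l + 1) := by
  obtain ⟨N, rfl⟩ : ∃ N, n = N + 1 := ⟨n - 1, by omega⟩
  obtain ⟨M, rfl⟩ : ∃ M, m = M + 1 := ⟨m - 1, by omega⟩
  simp only [Nat.add_sub_add_right, Nat.add_sub_cancel, Nat.sub_sub, mul_assoc]
  rw [sum_range_choose_succ_mul, sum_range_choose_mul_stirling_succ hrec hdiag he (by omega)]
  simp only [Nat.add_sub_add_right]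

end

theorem stmt16 (r : ℕ) (a : Fin r → ℚ) (ha : ∀ j, a j ≠ 0) (D : ℕ → ℚ → ℚ)
    (hD : ∀ x : ℚ, (∏ j, (onePow (a j) - 1)) * egf (fun n => D n x) = log1p ^ r * onePow x)
    (E : Fin r → ℕ → ℚ → ℚ)
    (hE : ∀ (j : Fin r) (x : ℚ),
      ((onePow (a j) - 1) * ∏ i, (onePow (a i) - 1)) * egf (fun n => E j n x) =
        log1p ^ (r + 1) * onePow x)
    (c : ℕ → ℚ) (hc : log1p * egf c = PowerSeries.X)
    (S1 : ℕ → ℕ → ℚ) (hS1 : ∀ (l : ℕ) (x : ℚ), ffall x l = ∑ j ∈ Finset.range (l + 1), S1 l j * x ^ j)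
    (n m : ℕ) (hm : 1 ≤ m) (hmn : m + 1 ≤ n) :
    ∑ l ∈ Finset.range (n - m + 1), (n.choose l : ℚ) * S1 (n - l) m * D l 0 =
      (∑ l ∈ Finset.range (n - m + 1),
        ((n - 1).choose l : ℚ) * S1 (n - l - 1) (m - 1) * D l (-1))
      + (1 / n) * ∑ l ∈ Finset.range (n - m),
          (n.choose (l + 1) : ℚ) * S1 (n - l - 1) m *
          ((r : ℚ) * (∑ i ∈ Finset.range (l + 2),
              ((l + 1).choose i : ℚ) * c i * D (l + 1 - i) (-1))
            - ∑ j, ∑ i ∈ Finset.range (l + 2),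
              ((l + 1).choose i : ℚ) * a j * c i * E j (l + 1 - i) (a j - 1)) := by
  have hD₀ : (∏ j, (onePow (a j) - 1)) * egf (fun n => D n 0) = log1p ^ r := by
    simpa [onePow_zero] using hD 0
  have hshift : ∀ l, D l 0 = D l (-1) + l * D (l - 1) (-1) := by
    refine congrFun (egf_injective ?_)
    refine mul_left_cancel₀ (prod_onePow_sub_one_ne_zero (s := univ) fun j _ => ha j) ?_
    have h : (1 + X) * onePow (-1) = 1 := by simpa [onePow_zero] using one_add_X_mul_onePow (-1)
    rw [← one_add_X_mul_egf]
    linear_combination hD₀ - (1 + X) * hD (-1) - log1p ^ r * h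
  have hS (k j : ℕ) (hj : j ≤ k) : S1 k j = (descPochhammer ℚ k).coeff j :=
    (coeff_descPochhammer_eq_of_ffall (hS1 k) hj).symm
  have hrec (k j : ℕ) (hj : j + 1 ≤ k) : S1 (k + 1) (j + 1) = S1 k j - k * S1 k (j + 1) := by
    rw [hS _ _ (by omega), hS _ _ (by omega), hS _ _ hj, coeff_descPochhammer_succ_succ]
  have hdiag (k : ℕ) : S1 k k = 1 := by
    rw [hS k k le_rfl, ← (monic_descPochhammer ℚ k).coeff_natDegree, descPochhammer_natDegree]
  rw [sum_range_choose_mul_stirling hrec hdiag hshift hm hmn, mul_sum]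
  congr 1
  refine sum_congr rfl fun l _ => ?_
  have hchoose : (n : ℚ) * (n - 1).choose l = n.choose (l + 1) * (l + 1) := by
    exact_mod_cast (Nat.sub_add_cancel (by omega : 1 ≤ n)) ▸ Nat.add_one_mul_choose_eq (n - 1) l
  rw [add_one_mul_daehee_succ ha hD₀ (hD (-1)) (fun j => hE j (a j - 1)) hc l, one_div,
    eq_inv_mul_iff_mul_eq₀ (Nat.cast_ne_zero.2 (by omega))]
  linear_combination (S1 (n - l - 1) m * D (l + 1) 0) * hchoose
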